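/- Asymptotic risk of the approximated projection estimator based on discrete observations. Let D be a Borel subset of ℝ ∖ {0}, η a σ-finite measure on D, and s : D → [0, ∞) a bounded measurable function with ∫_D s² dη < ∞. Let 𝒮 be a finite-dimensional subspace of L²(D, η) spanned by measurable functions φ₁, …, φ_d orthonormal in L²(D, η), each extended by 0 to all of ℝ, and let s^⊥ = Σᵢ (∫_D φᵢ s dη) φᵢ be the orthogonal projection of s on 𝒮. Let X = {X(t)}_{t ≥ 0} be a real-valued stochastic process with X(0) = 0 and stationary independent increments, and suppose that for each i = 1, …, d and all small t > 0 the random variables φᵢ(X(t)) and φᵢ(X(t))² are integrable with lim_{t→0⁺} (1/t) E[φᵢ(X(t))] = ∫_D φᵢ s dη and lim_{t→0⁺} (1/t) E[φᵢ(X(t))²] = ∫_D φᵢ² s dη. Fix T > 0 and define the approximated projection estimator ŝⁿ = Σᵢ β̂ⁿᵢ φᵢ, with β̂ⁿᵢ = (1/T) Σ_{k=1}^n φᵢ( X(kT/n) − X((k−1)T/n) ). Then lim_{n→∞} E[ ‖ŝⁿ − s^⊥‖² ] = (1/T) Σ_{i=1}^d ∫_D φᵢ² s dη, and lim_{n→∞}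 E[ ‖ŝⁿ − s‖² ] = ‖s − s^⊥‖² + (1/T) Σ_{i=1}^d ∫_D φᵢ² s dη, where ‖f‖² = ∫_D f² dη. -/

import Mathlib

/-!
By Parseval for the orthonormal family, `‖ŝⁿ - s^⊥‖² = ∑ᵢ (β̂ⁿᵢ - βᵢ)²`, and by Pythagoras
`‖ŝⁿ - s‖²` exceeds this by `‖s - s^⊥‖²`. Each `β̂ⁿᵢ` is `1/T` times a sum of `n` independent
copies of `φᵢ(X(T/n))`, so its mean-square error is
`(n/T²) Var φᵢ(X(T/n)) + ((n/T) E φᵢ(X(T/n)) - βᵢ)²`. With `t = T/n → 0⁺` the small-time limits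
kill the bias, give `(n/T²) E φᵢ(X(t))² → (1/T) ∫ φᵢ² s dη`, and make
`(n/T²) (E φᵢ(X(t)))² = (t/T) ((1/t) E φᵢ(X(t)))²` vanish.
-/

open MeasureTheory ProbabilityTheory Filter

noncomputable section

namespace ApproxProj

/-- coefficient statistics `β̂ⁿᵢ = (1/T) Σ_{k=1}^n φᵢ(X(kT/n) − X((k−1)T/n))` -/
def bhat {Ω : Type*} (X : ℝ → Ω → ℝ) (T : ℝ) (φ : ℝ → ℝ) (n : ℕ) (ω : Ω) : ℝ :=
  (1 / T) * ∑ k ∈ Finset.range n, φ (X (((k : ℝ) + 1) * T / n) ω - X ((k : ℝ) * T / n) ω)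

open Topology

section Orthonormal

variable {α ι : Type*} [MeasurableSpace α] {μ : Measure α} [Fintype ι] {φ : ι → α → ℝ}

lemma memLp_two_of_integral_mul_self_eq_one {f : α → ℝ} (hf : AEStronglyMeasurable f μ)
    (h : ∫ x, f x * f x ∂μ = 1) : MemLp f 2 μ := by
  refine (memLp_two_iff_integrable_sq hf).2 ?_
  simp_rw [sq]
  by_contra hint
  rw [integral_undef hint] at h
  exact zero_ne_one h

lemma integral_sum_mul_mul (hφ : ∀ i, MemLp (φ i) 2 μ) {v : α → ℝ} (hv : MemLp v 2 μ)
    (c : ι → ℝ) : ∫ x, (∑ i, c i * φ i x) * v x ∂μ = ∑ i, c i * ∫ x, φ i x * v x ∂μ := by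
  have hint : ∀ i, Integrable (fun x => c i * (φ i x * v x)) μ :=
    fun i => ((hφ i).integrable_mul hv).const_mul (c i)
  simp_rw [← integral_const_mul, ← integral_finsetSum _ fun i _ => hint i, Finset.sum_mul]
  congr with x
  exact Finset.sum_congr rfl fun i _ => by ring

variable [DecidableEq ι]

lemma integral_mul_sum_mul_of_orthonormal (hφ : ∀ i, MemLp (φ i) 2 μ)
    (horth : ∀ i j, ∫ x, φ i x * φ j x ∂μ = if i = j then 1 else 0) (c : ι → ℝ) (i : ι) :
    ∫ x, φ i x * ∑ j, c j * φ j x ∂μ = c i := by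
  simp_rw [mul_comm (φ i _), integral_sum_mul_mul hφ (hφ i), horth]
  simp

lemma integral_sum_mul_sq (hφ : ∀ i, MemLp (φ i) 2 μ)
    (horth : ∀ i j, ∫ x, φ i x * φ j x ∂μ = if i = j then 1 else 0) (c : ι → ℝ) :
    ∫ x, (∑ i, c i * φ i x) ^ 2 ∂μ = ∑ i, c i ^ 2 := by
  have hL2 : MemLp (fun x => ∑ i, c i * φ i x) 2 μ :=
    memLp_finsetSum _ fun i _ => (hφ i).const_mul (c i)
  simp_rw [sq, integral_sum_mul_mul hφ hL2, integral_mul_sum_mul_of_orthonormal hφ horth]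

lemma integral_sum_mul_sub_sum_mul_sq (hφ : ∀ i, MemLp (φ i) 2 μ)
    (horth : ∀ i j, ∫ x, φ i x * φ j x ∂μ = if i = j then 1 else 0) (b c : ι → ℝ) :
    ∫ x, (∑ i, c i * φ i x - ∑ i, b i * φ i x) ^ 2 ∂μ = ∑ i, (c i - b i) ^ 2 := by
  simp_rw [← Finset.sum_sub_distrib, ← sub_mul]
  exact integral_sum_mul_sq hφ horth _

lemma integral_mul_sub_sum_mul_eq_zero (hφ : ∀ i, MemLp (φ i) 2 μ)
    (horth : ∀ i j, ∫ x, φ i x * φ j x ∂μ = if i = j then 1 else 0) {v : α → ℝ}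
    (hv : MemLp v 2 μ) (i : ι) :
    ∫ x, φ i x * (v x - ∑ j, (∫ y, φ j y * v y ∂μ) * φ j x) ∂μ = 0 := by
  have hproj : MemLp (fun x => ∑ j, (∫ y, φ j y * v y ∂μ) * φ j x) 2 μ :=
    memLp_finsetSum _ fun j _ => (hφ j).const_mul _
  have h₁ : Integrable (fun x => φ i x * v x) μ := (hφ i).integrable_mul hv
  have h₂ : Integrable (fun x => φ i x * ∑ j, (∫ y, φ j y * v y ∂μ) * φ j x) μ :=
    (hφ i).integrable_mul hproj
  simp_rw [mul_sub]
  rw [integral_sub h₁ h₂, integral_mul_sum_mul_of_orthonormal hφ horth, sub_self]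

/-- Pythagoras around the orthogonal projection `∑ i, ⟪φ i, v⟫ φ i` of `v`. -/
lemma integral_sum_mul_sub_sq (hφ : ∀ i, MemLp (φ i) 2 μ)
    (horth : ∀ i j, ∫ x, φ i x * φ j x ∂μ = if i = j then 1 else 0) {v : α → ℝ}
    (hv : MemLp v 2 μ) (c : ι → ℝ) :
    ∫ x, (∑ i, c i * φ i x - v x) ^ 2 ∂μ =
      ∑ i, (c i - ∫ y, φ i y * v y ∂μ) ^ 2 +
        ∫ x, (v x - ∑ i, (∫ y, φ i y * v y ∂μ) * φ i x) ^ 2 ∂μ := by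
  set b := fun i => ∫ y, φ i y * v y ∂μ
  set r := fun x => v x - ∑ i, b i * φ i x
  set u := fun x => ∑ i, (c i - b i) * φ i x
  have hu : MemLp u 2 μ := memLp_finsetSum _ fun i _ => (hφ i).const_mul _
  have hr : MemLp r 2 μ := hv.sub (memLp_finsetSum _ fun i _ => (hφ i).const_mul _)
  have hur : ∫ x, u x * r x ∂μ = 0 := by
    simp [u, integral_sum_mul_mul hφ hr, r, b, integral_mul_sub_sum_mul_eq_zero hφ horth hv]
  have hdecomp : ∀ x, ∑ i, c i * φ i x - v x = u x - r x := fun x => by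
    simp only [u, r, sub_mul, Finset.sum_sub_distrib]
    ring
  calc ∫ x, (∑ i, c i * φ i x - v x) ^ 2 ∂μ
      = ∫ x, (u x ^ 2 + r x ^ 2 - 2 * (u x * r x)) ∂μ := by
        congr with x
        rw [hdecomp]
        ring
    _ = ∫ x, u x ^ 2 ∂μ + ∫ x, r x ^ 2 ∂μ - 2 * ∫ x, u x * r x ∂μ := by
        have hur_int : Integrable (fun x => u x * r x) μ := hu.integrable_mul hr
        rw [integral_sub (f := fun x => u x ^ 2 + r x ^ 2)
          (hu.integrable_sq.add hr.integrable_sq) (hur_int.const_mul 2),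
          integral_add hu.integrable_sq hr.integrable_sq, integral_const_mul]
    _ = _ := by
        rw [hur, integral_sum_mul_sq hφ horth]
        ring

end Orthonormal

section Moments

variable {Ω : Type*} [MeasurableSpace Ω] {P : Measure Ω} [IsProbabilityMeasure P]

lemma integral_sq_eq_variance_add_sq {W : Ω → ℝ} (hW : MemLp W 2 P) :
    ∫ ω, W ω ^ 2 ∂P = variance W P + (∫ ω, W ω ∂P) ^ 2 := by
  rw [variance_eq_sub hW]
  simp only [Pi.pow_apply]
  ring

lemma integral_mul_sum_sub_sq_of_identDistrib {ι : Type*} [Fintype ι] {Y : ι → Ω → ℝ}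
    {Z : Ω → ℝ} (hY : ∀ k, IdentDistrib (Y k) Z P P)
    (hindep : Pairwise fun k l => IndepFun (Y k) (Y l) P) (hZ : MemLp Z 2 P) (c b : ℝ) :
    ∫ ω, (c * ∑ k, Y k ω - b) ^ 2 ∂P =
      c ^ 2 * Fintype.card ι * variance Z P + (c * Fintype.card ι * ∫ ω, Z ω ∂P - b) ^ 2 := by
  have hYL2 : ∀ k, MemLp (Y k) 2 P := fun k => (hY k).memLp_iff.2 hZ
  have hS : MemLp (fun ω => ∑ k, Y k ω) 2 P := memLp_finsetSum _ fun k _ => hYL2 k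
  have hvar : variance (fun ω => ∑ k, Y k ω) P = Fintype.card ι * variance Z P := by
    rw [← Finset.sum_fn, IndepFun.variance_sum (fun k _ => hYL2 k)
      fun k _ l _ hkl => hindep hkl]
    simp [(hY _).variance_eq]
  have hmean : ∫ ω, ∑ k, Y k ω ∂P = Fintype.card ι * ∫ ω, Z ω ∂P := by
    rw [integral_finsetSum _ fun k _ => (hYL2 k).integrable one_le_two]
    simp [(hY _).integral_eq]
  have hW : MemLp (fun ω => c * ∑ k, Y k ω - b) 2 P := (hS.const_mul c).sub (memLp_const b)
  rw [integral_sq_eq_variance_add_sq hW,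
    variance_sub_const (hS.const_mul c).aestronglyMeasurable, variance_const_mul, hvar,
    integral_sub ((hS.const_mul c).integrable one_le_two) (integrable_const b),
    integral_const_mul, hmean, integral_const, probReal_univ, one_smul]
  ring

lemma tendsto_lintegral_ofReal_sum_add {ι : Type*} [Fintype ι] {Z : ℕ → ι → Ω → ℝ}
    {a : ι → ℝ} (hZint : ∀ i, ∀ᶠ n in atTop, Integrable (Z n i) P)
    (hZlim : ∀ i, Tendsto (fun n => ∫ ω, Z n i ω ∂P) atTop (𝓝 (a i)))
    (hZ0 : ∀ n i ω, 0 ≤ Z n i ω) {c : ℝ} (hc : 0 ≤ c) :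
    Tendsto (fun n => ∫⁻ ω, ENNReal.ofReal (∑ i, Z n i ω + c) ∂P) atTop
      (𝓝 (ENNReal.ofReal (∑ i, a i + c))) := by
  refine (ENNReal.tendsto_ofReal
    ((tendsto_finsetSum _ fun i _ => hZlim i).add_const c)).congr' ?_
  filter_upwards [eventually_all.2 hZint] with n hn
  have hsum : Integrable (fun ω => ∑ i, Z n i ω) P := integrable_finsetSum _ fun i _ => hn i
  have hsum_add : Integrable (fun ω => ∑ i, Z n i ω + c) P := hsum.add (integrable_const c)
  rw [← ofReal_integral_eq_lintegral_ofReal hsum_add (Eventually.of_forall fun ω => add_nonneg (Finset.sum_nonneg fun i _ => hZ0 n i ω) hc),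
    integral_add hsum (integrable_const c), integral_finsetSum _ fun i _ => hn i]
  simp

end Moments

lemma bhat_eq_sum_fin {Ω : Type*} (X : ℝ → Ω → ℝ) (T : ℝ) (φ : ℝ → ℝ) (n : ℕ) (ω : Ω) :
    bhat X T φ n ω = (1 / T) * ∑ k : Fin n, φ (X ((k + 1) * (T / n)) ω - X (k * (T / n)) ω) := by
  simp_rw [bhat, ← Fin.sum_univ_eq_sum_range, mul_div_assoc]

section Increments

variable {Ω : Type*} [MeasurableSpace Ω] {P : Measure Ω} {X : ℝ → Ω → ℝ}

lemma iIndepFun_increments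
    (hindep : ∀ (n : ℕ) (t : Fin (n + 1) → ℝ), Monotone t → 0 ≤ t 0 →
      iIndepFun (fun (i : Fin n) (ω : Ω) => X (t i.succ) ω - X (t i.castSucc) ω) P)
    {τ : ℝ} (hτ : 0 ≤ τ) (n : ℕ) :
    iIndepFun (fun (k : Fin n) (ω : Ω) => X ((k + 1) * τ) ω - X (k * τ) ω) P := by
  have hmono : Monotone fun j : Fin (n + 1) => (j : ℝ) * τ := fun j l hjl =>
    mul_le_mul_of_nonneg_right (Nat.cast_le.2 hjl) hτ
  simpa using hindep n _ hmono (by simp)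

lemma identDistrib_increment (hXmeas : ∀ t, Measurable (X t))
    (hstat : ∀ t h : ℝ, 0 ≤ t → 0 ≤ h →
      Measure.map (fun ω => X (t + h) ω - X t ω) P = Measure.map (X h) P)
    {τ : ℝ} (hτ : 0 ≤ τ) (k : ℕ) :
    IdentDistrib (fun ω => X ((k + 1) * τ) ω - X (k * τ) ω) (X τ) P P where
  aemeasurable_fst := ((hXmeas _).sub (hXmeas _)).aemeasurable
  aemeasurable_snd := (hXmeas τ).aemeasurable
  map_eq := by
    simpa only [add_one_mul] using hstat (k * τ) τ (by positivity) hτ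

lemma memLp_bhat (hXmeas : ∀ t, Measurable (X t))
    (hstat : ∀ t h : ℝ, 0 ≤ t → 0 ≤ h →
      Measure.map (fun ω => X (t + h) ω - X t ω) P = Measure.map (X h) P)
    {φ : ℝ → ℝ} (hφ : Measurable φ) {T : ℝ} (hT : 0 ≤ T) (n : ℕ)
    (hL2 : MemLp (fun ω => φ (X (T / n) ω)) 2 P) : MemLp (bhat X T φ n) 2 P := by
  have hinc : ∀ k : Fin n,
      MemLp (fun ω => φ (X ((k + 1) * (T / n)) ω - X (k * (T / n)) ω)) 2 P := fun k =>
    ((identDistrib_increment hXmeas hstat (by positivity) k).comp hφ).memLp_iff.2 hL2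
  simp_rw [funext (bhat_eq_sum_fin X T φ n)]
  exact (memLp_finsetSum _ fun k _ => hinc k).const_mul _

lemma integral_bhat_sub_sq [IsProbabilityMeasure P] (hXmeas : ∀ t, Measurable (X t))
    (hindep : ∀ (n : ℕ) (t : Fin (n + 1) → ℝ), Monotone t → 0 ≤ t 0 →
      iIndepFun (fun (i : Fin n) (ω : Ω) => X (t i.succ) ω - X (t i.castSucc) ω) P)
    (hstat : ∀ t h : ℝ, 0 ≤ t → 0 ≤ h →
      Measure.map (fun ω => X (t + h) ω - X t ω) P = Measure.map (X h) P)
    {φ : ℝ → ℝ} (hφ : Measurable φ) {T : ℝ} (hT : 0 ≤ T) (n : ℕ)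
    (hL2 : MemLp (fun ω => φ (X (T / n) ω)) 2 P) (b : ℝ) :
    ∫ ω, (bhat X T φ n ω - b) ^ 2 ∂P =
      (1 / T) ^ 2 * n * variance (fun ω => φ (X (T / n) ω)) P +
        ((1 / T) * n * ∫ ω, φ (X (T / n) ω) ∂P - b) ^ 2 := by
  have hτ : 0 ≤ T / n := by positivity
  simp_rw [bhat_eq_sum_fin]
  simpa [Function.comp_def] using integral_mul_sum_sub_sq_of_identDistrib
    (fun k : Fin n => (identDistrib_increment hXmeas hstat hτ k).comp hφ)
    (fun k l hkl => ((iIndepFun_increments hindep hτ n).indepFun hkl).comp hφ hφ) hL2 (1 / T) b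

end Increments

lemma tendsto_risk_of_tendsto {m q : ℕ → ℝ} {a b T : ℝ}
    (hm : Tendsto (fun n => n / T * m n) atTop (𝓝 b))
    (hq : Tendsto (fun n => n / T * q n) atTop (𝓝 a)) :
    Tendsto (fun n : ℕ => (1 / T) ^ 2 * n * (q n - m n ^ 2) + ((1 / T) * n * m n - b) ^ 2)
      atTop (𝓝 ((1 / T) * a)) := by
  have hlim : Tendsto (fun n : ℕ => (1 / T) * (n / T * q n) - (1 / n) * (n / T * m n) ^ 2 +
      (n / T * m n - b) ^ 2) atTop (𝓝 ((1 / T) * a)) := by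
    simpa using ((hq.const_mul (1 / T)).sub
      (tendsto_one_div_atTop_nhds_zero_nat.mul (hm.pow 2))).add ((hm.sub_const b).pow 2)
  refine hlim.congr' ((eventually_ne_atTop 0).mono fun n hn => ?_)
  field_simp

lemma tendsto_div_natCast_nhdsGT_zero {T : ℝ} (hT : 0 < T) :
    Tendsto (fun n : ℕ => T / n) atTop (𝓝[>] 0) := by
  simpa [Function.comp_def] using tendsto_inv_atTop_nhdsGT_zero.comp
    (tendsto_natCast_atTop_atTop.atTop_div_const hT)


lemma tendsto_integral_bhat_sub_sq {Ω : Type*} [MeasurableSpace Ω] {P : Measure Ω}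
    [IsProbabilityMeasure P] {X : ℝ → Ω → ℝ} (hXmeas : ∀ t, Measurable (X t))
    (hindep : ∀ (n : ℕ) (t : Fin (n + 1) → ℝ), Monotone t → 0 ≤ t 0 →
      iIndepFun (fun (i : Fin n) (ω : Ω) => X (t i.succ) ω - X (t i.castSucc) ω) P)
    (hstat : ∀ t h : ℝ, 0 ≤ t → 0 ≤ h →
      Measure.map (fun ω => X (t + h) ω - X t ω) P = Measure.map (X h) P)
    {φ : ℝ → ℝ} (hφ : Measurable φ)
    (hint : ∀ᶠ t in 𝓝[>] 0, Integrable (fun ω => φ (X t ω) ^ 2) P) {a b : ℝ}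
    (hlim1 : Tendsto (fun t : ℝ => (1 / t) * ∫ ω, φ (X t ω) ∂P) (𝓝[>] 0) (𝓝 b))
    (hlim2 : Tendsto (fun t : ℝ => (1 / t) * ∫ ω, φ (X t ω) ^ 2 ∂P) (𝓝[>] 0) (𝓝 a))
    {T : ℝ} (hT : 0 < T) :
    (∀ᶠ n in atTop, Integrable (fun ω => (bhat X T φ n ω - b) ^ 2) P) ∧
      Tendsto (fun n => ∫ ω, (bhat X T φ n ω - b) ^ 2 ∂P) atTop (𝓝 ((1 / T) * a)) := by
  have htn := tendsto_div_natCast_nhdsGT_zero hT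
  have hL2 : ∀ᶠ n : ℕ in atTop, MemLp (fun ω => φ (X (T / n) ω)) 2 P :=
    (htn.eventually hint).mono fun n h =>
      (memLp_two_iff_integrable_sq (hφ.comp (hXmeas _)).aestronglyMeasurable).2 h
  refine ⟨hL2.mono fun n h =>
    ((memLp_bhat hXmeas hstat hφ hT.le n h).sub (memLp_const b)).integrable_sq, ?_⟩
  have hm := hlim1.comp htn
  have hq := hlim2.comp htn
  simp only [Function.comp_def, one_div_div] at hm hq
  refine (tendsto_risk_of_tendsto hm hq).congr' (hL2.mono fun n h => ?_)
  simp only [integral_bhat_sub_sq hXmeas hindep hstat hφ hT.le n h, variance_eq_sub h,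
    Pi.pow_apply]

theorem approximated_projection_estimator_asymptotic_risk_general
    {Ω : Type*} [MeasurableSpace Ω] (P : Measure Ω) [IsProbabilityMeasure P]
    (D : Set ℝ)
    (η : Measure ℝ)
    (s : ℝ → ℝ) (hsmeas : Measurable s)
    (hssq : (∫⁻ x in D, ENNReal.ofReal ((s x) ^ 2) ∂η) < ⊤)
    (d : ℕ) (φ : Fin d → ℝ → ℝ) (hφmeas : ∀ i, Measurable (φ i))
    (horth : ∀ i j, (∫ x in D, φ i x * φ j x ∂η) = if i = j then (1 : ℝ) else 0)
    (X : ℝ → Ω → ℝ) (hXmeas : ∀ t, Measurable (X t))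
    (hindep : ∀ (n : ℕ) (t : Fin (n + 1) → ℝ), Monotone t → 0 ≤ t 0 →
      iIndepFun
        (fun (i : Fin n) (ω : Ω) => X (t i.succ) ω - X (t i.castSucc) ω) P)
    (hstat : ∀ t h : ℝ, 0 ≤ t → 0 ≤ h →
      Measure.map (fun ω => X (t + h) ω - X t ω) P = Measure.map (X h) P)
    (hint : ∀ i, ∀ᶠ t in nhdsWithin (0 : ℝ) (Set.Ioi 0),
      Integrable (fun ω => φ i (X t ω)) P ∧ Integrable (fun ω => (φ i (X t ω)) ^ 2) P)
    (hlim1 : ∀ i, Tendsto (fun t : ℝ => (1 / t) * ∫ ω, φ i (X t ω) ∂P)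
      (nhdsWithin 0 (Set.Ioi 0)) (nhds (∫ x in D, φ i x * s x ∂η)))
    (hlim2 : ∀ i, Tendsto (fun t : ℝ => (1 / t) * ∫ ω, (φ i (X t ω)) ^ 2 ∂P)
      (nhdsWithin 0 (Set.Ioi 0)) (nhds (∫ x in D, (φ i x) ^ 2 * s x ∂η)))
    (T : ℝ) (hT : 0 < T) :
    Tendsto (fun n : ℕ => ∫⁻ ω, ENNReal.ofReal
        (∫ x in D,
          ((∑ i, bhat X T (φ i) n ω * φ i x) -
            ∑ i, (∫ y in D, φ i y * s y ∂η) * φ i x) ^ 2 ∂η) ∂P)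
      atTop (nhds (ENNReal.ofReal ((1 / T) * ∑ i, ∫ x in D, (φ i x) ^ 2 * s x ∂η))) ∧
    Tendsto (fun n : ℕ => ∫⁻ ω, ENNReal.ofReal
        (∫ x in D, ((∑ i, bhat X T (φ i) n ω * φ i x) - s x) ^ 2 ∂η) ∂P)
      atTop
      (nhds (ENNReal.ofReal
        ((∫ x in D, (s x - ∑ i, (∫ y in D, φ i y * s y ∂η) * φ i x) ^ 2 ∂η) +
          (1 / T) * ∑ i, ∫ x in D, (φ i x) ^ 2 * s x ∂η))) := by
  have hφL2 : ∀ i, MemLp (φ i) 2 (η.restrict D) := fun i =>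
    memLp_two_of_integral_mul_self_eq_one (hφmeas i).aestronglyMeasurable (by simp [horth])
  have hsL2 : MemLp s 2 (η.restrict D) :=
    (memLp_two_iff_integrable_sq hsmeas.aestronglyMeasurable).2
      ⟨(hsmeas.pow_const 2).aestronglyMeasurable,
        (hasFiniteIntegral_iff_ofReal (Eventually.of_forall fun x => sq_nonneg (s x))).2 hssq⟩
  have hcoeff := fun i => tendsto_integral_bhat_sub_sq hXmeas hindep hstat (hφmeas i)
    ((hint i).mono fun _ h => h.2) (hlim1 i) (hlim2 i) hT
  simp only [integral_sum_mul_sub_sum_mul_sq hφL2 horth, integral_sum_mul_sub_sq hφL2 horth hsL2]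
  rw [Finset.mul_sum, add_comm]
  constructor
  · simpa only [add_zero] using tendsto_lintegral_ofReal_sum_add (fun i => (hcoeff i).1)
      (fun i => (hcoeff i).2) (fun _ _ _ => sq_nonneg _) le_rfl
  · exact tendsto_lintegral_ofReal_sum_add (fun i => (hcoeff i).1) (fun i => (hcoeff i).2)
      (fun _ _ _ => sq_nonneg _) (integral_nonneg fun x => sq_nonneg _)

/-- **Asymptotic risk of the approximated projection estimator based on discrete
observations.** Under the small-time limit conditions on the increments of `X`, the risk of
the approximated projection estimator `ŝⁿ = Σᵢ β̂ⁿᵢ φᵢ` converges to that of the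
continuous-time projection estimator:
`E‖ŝⁿ − s^⊥‖² → (1/T) Σᵢ ∫_D φᵢ² s dη` and
`E‖ŝⁿ − s‖² → ‖s − s^⊥‖² + (1/T) Σᵢ ∫_D φᵢ² s dη`. -/
theorem approximated_projection_estimator_asymptotic_risk
    {Ω : Type*} [MeasurableSpace Ω] (P : Measure Ω) [IsProbabilityMeasure P]
    (D : Set ℝ) (hD : MeasurableSet D) (hD0 : ∀ x ∈ D, x ≠ 0)
    (η : Measure ℝ) [SigmaFinite η]
    (s : ℝ → ℝ) (hsmeas : Measurable s) (hsnonneg : ∀ x ∈ D, 0 ≤ s x)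
    (hsbdd : ∃ B : ℝ, ∀ x ∈ D, s x ≤ B)
    (hssq : (∫⁻ x in D, ENNReal.ofReal ((s x) ^ 2) ∂η) < ⊤)
    (d : ℕ) (φ : Fin d → ℝ → ℝ) (hφmeas : ∀ i, Measurable (φ i))
    (hφzero : ∀ i, ∀ x ∉ D, φ i x = 0)
    (horth : ∀ i j, (∫ x in D, φ i x * φ j x ∂η) = if i = j then (1 : ℝ) else 0)
    (X : ℝ → Ω → ℝ) (hXmeas : ∀ t, Measurable (X t)) (hX0 : ∀ ω, X 0 ω = 0)
    (hindep : ∀ (n : ℕ) (t : Fin (n + 1) → ℝ), Monotone t → 0 ≤ t 0 →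
      iIndepFun
        (fun (i : Fin n) (ω : Ω) => X (t i.succ) ω - X (t i.castSucc) ω) P)
    (hstat : ∀ t h : ℝ, 0 ≤ t → 0 ≤ h →
      Measure.map (fun ω => X (t + h) ω - X t ω) P = Measure.map (X h) P)
    (hint : ∀ i, ∀ᶠ t in nhdsWithin (0 : ℝ) (Set.Ioi 0),
      Integrable (fun ω => φ i (X t ω)) P ∧ Integrable (fun ω => (φ i (X t ω)) ^ 2) P)
    (hlim1 : ∀ i, Tendsto (fun t : ℝ => (1 / t) * ∫ ω, φ i (X t ω) ∂P)
      (nhdsWithin 0 (Set.Ioi 0)) (nhds (∫ x in D, φ i x * s x ∂η)))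
    (hlim2 : ∀ i, Tendsto (fun t : ℝ => (1 / t) * ∫ ω, (φ i (X t ω)) ^ 2 ∂P)
      (nhdsWithin 0 (Set.Ioi 0)) (nhds (∫ x in D, (φ i x) ^ 2 * s x ∂η)))
    (T : ℝ) (hT : 0 < T) :
    Tendsto (fun n : ℕ => ∫⁻ ω, ENNReal.ofReal
        (∫ x in D,
          ((∑ i, bhat X T (φ i) n ω * φ i x) -
            ∑ i, (∫ y in D, φ i y * s y ∂η) * φ i x) ^ 2 ∂η) ∂P)
      atTop (nhds (ENNReal.ofReal ((1 / T) * ∑ i, ∫ x in D, (φ i x) ^ 2 * s x ∂η))) ∧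
    Tendsto (fun n : ℕ => ∫⁻ ω, ENNReal.ofReal
        (∫ x in D, ((∑ i, bhat X T (φ i) n ω * φ i x) - s x) ^ 2 ∂η) ∂P)
      atTop
      (nhds (ENNReal.ofReal
        ((∫ x in D, (s x - ∑ i, (∫ y in D, φ i y * s y ∂η) * φ i x) ^ 2 ∂η) +
          (1 / T) * ∑ i, ∫ x in D, (φ i x) ^ 2 * s x ∂η))) :=
  approximated_projection_estimator_asymptotic_risk_general P D η s hsmeas hssq d φ hφmeas horth X
    hXmeas hindep hstat hint hlim1 hlim2 T hT

end ApproxProj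

end
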